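/- arXiv:1602.03581 — 7 statements merged into one kernel-verified Lean document; each statement's English description precedes it below -/
import Mathlib

section
/- For all smooth functions f, g : ℝ → ℝ and every smooth u : ℝ → ℂ, [⟨f⟩₄, ⟨g⟩₀] u = 4·⟨f·g'⟩₃ u − 2·⟨3·f'·g'' + f·g'''⟩₁ u. -/
/-- The operator `⟨f⟩ₖ u = (1/2)·(f · u^{(k)} + (f·u)^{(k)})`. -/
noncomputable def Ang (k : ℕ) (f : ℝ → ℝ) (u : ℝ → ℂ) : ℝ → ℂ :=
  fun x => (1 / 2 : ℂ) *
    ((f x : ℂ) * iteratedDeriv k u x + iteratedDeriv k (fun t => (f t : ℂ) * u t) x)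

open Finset

private lemma one_le_inf : ((⊤ : ℕ∞) : WithTop ℕ∞) ≠ 0 := by simp

private lemma cdD {φ : ℝ → ℂ} (h : ContDiff ℝ (⊤ : ℕ∞) φ) : ContDiff ℝ (⊤ : ℕ∞) (deriv φ) :=
  (contDiff_infty_iff_deriv.mp h).2

private lemma cdIter {E : Type*} [NormedAddCommGroup E] [NormedSpace ℝ E] {p : ℝ → E}
    (h : ContDiff ℝ (⊤ : ℕ∞) p) (n : ℕ) : ContDiff ℝ (⊤ : ℕ∞) (iteratedDeriv n p) := by
  rw [iteratedDeriv_eq_iterate]; exact h.iterate_deriv n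

private lemma cdCoe {p : ℝ → ℝ} (hp : ContDiff ℝ (⊤ : ℕ∞) p) :
    ContDiff ℝ (⊤ : ℕ∞) (fun t => (p t : ℂ)) :=
  Complex.ofRealCLM.contDiff.comp hp

private lemma hdCoe {p : ℝ → ℝ} (hp : ContDiff ℝ (⊤ : ℕ∞) p) (j : ℕ) (t : ℝ) :
    HasDerivAt (fun s => ((iteratedDeriv j p s : ℝ) : ℂ))
      ((iteratedDeriv (j + 1) p t : ℝ) : ℂ) t := by
  have h1 : HasDerivAt (iteratedDeriv j p) (iteratedDeriv (j + 1) p t) t := by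
    rw [iteratedDeriv_succ]
    exact (((cdIter hp j).differentiable one_le_inf) t).hasDerivAt
  exact h1.ofReal_comp

private lemma hdCoe0 {p : ℝ → ℝ} (hp : ContDiff ℝ (⊤ : ℕ∞) p) (t : ℝ) :
    HasDerivAt (fun s => ((p s : ℝ) : ℂ)) ((iteratedDeriv 1 p t : ℝ) : ℂ) t := by
  simpa [iteratedDeriv_zero] using hdCoe hp 0 t

private lemma dCoe {p : ℝ → ℝ} (hp : ContDiff ℝ (⊤ : ℕ∞) p) (j : ℕ) :
    deriv (fun t => ((iteratedDeriv j p t : ℝ) : ℂ)) =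
      fun t => ((iteratedDeriv (j + 1) p t : ℝ) : ℂ) :=
  funext fun t => (hdCoe hp j t).deriv

private lemma iterCoeJ {p : ℝ → ℝ} (hp : ContDiff ℝ (⊤ : ℕ∞) p) (i j : ℕ) :
    iteratedDeriv i (fun t => ((iteratedDeriv j p t : ℝ) : ℂ)) =
      fun t => ((iteratedDeriv (i + j) p t : ℝ) : ℂ) := by
  induction i with
  | zero => simp [iteratedDeriv_zero]
  | succ i ih =>
    rw [show i + 1 + j = (i + j) + 1 from by omega, iteratedDeriv_succ, ih, dCoe hp]

private lemma iterCoe0 {p : ℝ → ℝ} (hp : ContDiff ℝ (⊤ : ℕ∞) p) (i : ℕ) :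
    iteratedDeriv i (fun t => ((p t : ℝ) : ℂ)) =
      fun t => ((iteratedDeriv i p t : ℝ) : ℂ) := by
  have := iterCoeJ hp i 0
  simpa [iteratedDeriv_zero] using this

private lemma itadd (n : ℕ) (φ ψ : ℝ → ℂ) (hφ : ContDiff ℝ (⊤ : ℕ∞) φ)
    (hψ : ContDiff ℝ (⊤ : ℕ∞) ψ) :
    iteratedDeriv n (fun t => φ t + ψ t) = fun x => iteratedDeriv n φ x + iteratedDeriv n ψ x := by
  funext x
  simp only [← iteratedDerivWithin_univ]
  exact iteratedDerivWithin_add (Set.mem_univ x) uniqueDiffOn_univ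
    (hφ.contDiffWithinAt.of_le (by exact_mod_cast (le_top : (n : ℕ∞) ≤ ⊤)))
    (hψ.contDiffWithinAt.of_le (by exact_mod_cast (le_top : (n : ℕ∞) ≤ ⊤)))

private lemma leib : ∀ (n : ℕ) (φ ψ : ℝ → ℂ), ContDiff ℝ (⊤ : ℕ∞) φ → ContDiff ℝ (⊤ : ℕ∞) ψ →
    iteratedDeriv n (fun t => φ t * ψ t) =
      fun x => ∑ i ∈ range (n + 1), (n.choose i : ℂ) *
        (iteratedDeriv i φ x * iteratedDeriv (n - i) ψ x) := by
  intro n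
  induction n with
  | zero => intro φ ψ _ _; funext x; simp
  | succ n ih =>
    intro φ ψ hφ hψ
    have hφ' := cdD hφ
    have hψ' := cdD hψ
    have hmul : deriv (fun t => φ t * ψ t) = fun t => deriv φ t * ψ t + φ t * deriv ψ t :=
      funext fun t => deriv_fun_mul ((hφ.differentiable one_le_inf) t)
        ((hψ.differentiable one_le_inf) t)
    rw [iteratedDeriv_succ', hmul, itadd n _ _ (hφ'.mul hψ) (hφ.mul hψ')]
    funext x
    rw [ih _ _ hφ' hψ, ih _ _ hφ hψ',
      Finset.sum_choose_succ_mul (fun i j => iteratedDeriv i φ x * iteratedDeriv j ψ x) n]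
    simp only [← iteratedDeriv_succ']
    rw [add_comm]
    congr 1
    refine sum_congr rfl fun i hi => ?_
    rw [Nat.succ_sub (Nat.lt_succ_iff.mp (mem_range.mp hi))]

theorem commutator_Ang_four_zero (f g : ℝ → ℝ) (hf : ContDiff ℝ (⊤ : ℕ∞) f) (hg : ContDiff ℝ (⊤ : ℕ∞) g)
    (u : ℝ → ℂ) (hu : ContDiff ℝ (⊤ : ℕ∞) u) (x : ℝ) :
    Ang 4 f (Ang 0 g u) x - Ang 0 g (Ang 4 f u) x =
      4 * Ang 3 (fun t => f t * deriv g t) u x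
      - 2 * Ang 1 (fun t => 3 * deriv f t * iteratedDeriv 2 g t + f t * iteratedDeriv 3 g t) u x := by
  have hf' : ContDiff ℝ (⊤ : ℕ∞) f := hf.of_le (by simp)
  have hg' : ContDiff ℝ (⊤ : ℕ∞) g := hg.of_le (by simp)
  have hu' : ContDiff ℝ (⊤ : ℕ∞) u := hu.of_le (by simp)
  -- Ang 0 is multiplication
  have hA0g : ∀ v : ℝ → ℂ, Ang 0 g v = fun y => (g y : ℂ) * v y := by
    intro v; funext y; simp [Ang, iteratedDeriv_zero]; ring
  -- rewrite the coerced real products inside the RHS operators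
  have hc3 : (fun t => ((f t * deriv g t : ℝ) : ℂ) * u t) =
      fun t => (f t : ℂ) * (((iteratedDeriv 1 g t : ℝ) : ℂ) * u t) := by
    funext t; rw [iteratedDeriv_one]; push_cast; ring
  have hc1 : (fun t => ((3 * deriv f t * iteratedDeriv 2 g t + f t * iteratedDeriv 3 g t : ℝ) : ℂ) * u t) =
      fun t => ((3 : ℂ) * ((iteratedDeriv 1 f t : ℝ) : ℂ) * ((iteratedDeriv 2 g t : ℝ) : ℂ)
        + (f t : ℂ) * ((iteratedDeriv 3 g t : ℝ) : ℂ)) * u t := by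
    funext t; rw [iteratedDeriv_one]; push_cast; ring
  -- Leibniz expansions, as ∀-n simp lemmas
  have LGu : ∀ n, iteratedDeriv n (fun t => (g t : ℂ) * u t) =
      fun y => ∑ i ∈ range (n + 1), (n.choose i : ℂ) *
        (iteratedDeriv i (fun t => (g t : ℂ)) y * iteratedDeriv (n - i) u y) :=
    fun n => leib n _ _ (cdCoe hg') hu'
  have LFu : ∀ n, iteratedDeriv n (fun t => (f t : ℂ) * u t) =
      fun y => ∑ i ∈ range (n + 1), (n.choose i : ℂ) *
        (iteratedDeriv i (fun t => (f t : ℂ)) y * iteratedDeriv (n - i) u y) :=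
    fun n => leib n _ _ (cdCoe hf') hu'
  have LFGu : ∀ n, iteratedDeriv n (fun t => (f t : ℂ) * ((g t : ℂ) * u t)) =
      fun y => ∑ i ∈ range (n + 1), (n.choose i : ℂ) *
        (iteratedDeriv i (fun t => (f t : ℂ)) y *
          iteratedDeriv (n - i) (fun t => (g t : ℂ) * u t) y) :=
    fun n => leib n _ _ (cdCoe hf') ((cdCoe hg').mul hu')
  have LG'u : ∀ n, iteratedDeriv n (fun t => ((iteratedDeriv 1 g t : ℝ) : ℂ) * u t) =
      fun y => ∑ i ∈ range (n + 1), (n.choose i : ℂ) *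
        (iteratedDeriv i (fun t => ((iteratedDeriv 1 g t : ℝ) : ℂ)) y * iteratedDeriv (n - i) u y) :=
    fun n => leib n _ _ (cdCoe (cdIter hg' 1)) hu'
  have LFG'u : ∀ n, iteratedDeriv n (fun t => (f t : ℂ) * (((iteratedDeriv 1 g t : ℝ) : ℂ) * u t)) =
      fun y => ∑ i ∈ range (n + 1), (n.choose i : ℂ) *
        (iteratedDeriv i (fun t => (f t : ℂ)) y *
          iteratedDeriv (n - i) (fun t => ((iteratedDeriv 1 g t : ℝ) : ℂ) * u t) y) :=
    fun n => leib n _ _ (cdCoe hf') ((cdCoe (cdIter hg' 1)).mul hu')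
  -- the Ang 1 term: a single derivative
  have hux : HasDerivAt u (iteratedDeriv 1 u x) x := by
    rw [iteratedDeriv_one]
    exact ((hu'.differentiable one_le_inf) x).hasDerivAt
  have hW := (((hdCoe hf' 1 x).const_mul (3 : ℂ)).mul (hdCoe hg' 2 x)).add
      ((hdCoe0 hf' x).mul (hdCoe hg' 3 x))
  have T5 : iteratedDeriv 1 (fun t => ((3 : ℂ) * ((iteratedDeriv 1 f t : ℝ) : ℂ) *
        ((iteratedDeriv 2 g t : ℝ) : ℂ) + (f t : ℂ) * ((iteratedDeriv 3 g t : ℝ) : ℂ)) * u t) x =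
      ((3 : ℂ) * ((iteratedDeriv 2 f x : ℝ) : ℂ) * ((iteratedDeriv 2 g x : ℝ) : ℂ)
        + (3 : ℂ) * ((iteratedDeriv 1 f x : ℝ) : ℂ) * ((iteratedDeriv 3 g x : ℝ) : ℂ)
        + ((iteratedDeriv 1 f x : ℝ) : ℂ) * ((iteratedDeriv 3 g x : ℝ) : ℂ)
        + (f x : ℂ) * ((iteratedDeriv 4 g x : ℝ) : ℂ)) * u x
      + ((3 : ℂ) * ((iteratedDeriv 1 f x : ℝ) : ℂ) * ((iteratedDeriv 2 g x : ℝ) : ℂ)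
        + (f x : ℂ) * ((iteratedDeriv 3 g x : ℝ) : ℂ)) * iteratedDeriv 1 u x := by
    rw [iteratedDeriv_one]
    refine HasDerivAt.deriv ?_
    convert hW.mul hux using 1
    · rfl
    · rfl
    · simp only [Pi.add_apply, Pi.mul_apply, Nat.reduceAdd]; ring
  rw [hA0g u, hA0g (Ang 4 f u)]
  simp only [Ang, hc3, hc1]
  rw [T5]
  simp only [LFGu, LGu, LFu, LFG'u, LG'u, iterCoe0 hf', iterCoe0 hg', iterCoeJ hg',
    Finset.sum_range_succ, Finset.sum_range_zero, iteratedDeriv_zero]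
  norm_num [Nat.choose]
  ring
end

section
/- For all smooth functions f, g : ℝ → ℝ and every smooth u : ℝ → ℂ, [⟨f⟩₃, ⟨g⟩₀] u = 3·⟨f·g'⟩₂ u − (1/2)·⟨3·f'·g'' + f·g'''⟩₀ u. -/
section helpers

lemma smooth_deriv {a : ℝ → ℂ} (ha : ContDiff ℝ (⊤ : ℕ∞) a) : ContDiff ℝ (⊤ : ℕ∞) (deriv a) :=
  (contDiff_infty_iff_deriv.mp ha).2

lemma smooth_derivR {a : ℝ → ℝ} (ha : ContDiff ℝ (⊤ : ℕ∞) a) : ContDiff ℝ (⊤ : ℕ∞) (deriv a) :=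
  (contDiff_infty_iff_deriv.mp ha).2

lemma D1 (a b : ℝ → ℂ) (ha : ContDiff ℝ (⊤ : ℕ∞) a) (hb : ContDiff ℝ (⊤ : ℕ∞) b) :
    deriv (fun t => a t * b t) = fun t => deriv a t * b t + a t * deriv b t := by
  funext t
  exact deriv_fun_mul ((ha.differentiable (by simp)) t) ((hb.differentiable (by simp)) t)

lemma D2 (a b : ℝ → ℂ) (ha : ContDiff ℝ (⊤ : ℕ∞) a) (hb : ContDiff ℝ (⊤ : ℕ∞) b) :
    deriv (deriv (fun t => a t * b t)) =
      fun t => deriv (deriv a) t * b t + 2 * (deriv a t * deriv b t)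
        + a t * deriv (deriv b) t := by
  rw [D1 a b ha hb]
  funext t
  rw [deriv_fun_add ((((smooth_deriv ha).mul hb).differentiable (by simp)) t)
      (((ha.mul (smooth_deriv hb)).differentiable (by simp)) t),
    deriv_fun_mul (((smooth_deriv ha).differentiable (by simp)) t) ((hb.differentiable (by simp)) t),
    deriv_fun_mul ((ha.differentiable (by simp)) t) (((smooth_deriv hb).differentiable (by simp)) t)]
  ring

lemma D3 (a b : ℝ → ℂ) (ha : ContDiff ℝ (⊤ : ℕ∞) a) (hb : ContDiff ℝ (⊤ : ℕ∞) b) :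
    deriv (deriv (deriv (fun t => a t * b t))) =
      fun t => deriv (deriv (deriv a)) t * b t
        + 3 * (deriv (deriv a) t * deriv b t)
        + 3 * (deriv a t * deriv (deriv b) t)
        + a t * deriv (deriv (deriv b)) t := by
  rw [D2 a b ha hb]
  funext t
  have h1 : DifferentiableAt ℝ (fun t => deriv (deriv a) t * b t) t :=
    (((smooth_deriv (smooth_deriv ha)).mul hb).differentiable (by simp)) t
  have h2 : DifferentiableAt ℝ (fun t => deriv a t * deriv b t) t :=
    (((smooth_deriv ha).mul (smooth_deriv hb)).differentiable (by simp)) t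
  have h2' : DifferentiableAt ℝ (fun t => 2 * (deriv a t * deriv b t)) t :=
    ((contDiff_const.mul ((smooth_deriv ha).mul (smooth_deriv hb))).differentiable (by simp)) t
  have h3 : DifferentiableAt ℝ (fun t => a t * deriv (deriv b) t) t :=
    ((ha.mul (smooth_deriv (smooth_deriv hb))).differentiable (by simp)) t
  rw [deriv_fun_add (h1.fun_add h2') h3, deriv_fun_add h1 h2', deriv_const_mul 2 h2,
    deriv_fun_mul (((smooth_deriv (smooth_deriv ha)).differentiable (by simp)) t)
      ((hb.differentiable (by simp)) t),
    deriv_fun_mul (((smooth_deriv ha).differentiable (by simp)) t)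
      (((smooth_deriv hb).differentiable (by simp)) t),
    deriv_fun_mul ((ha.differentiable (by simp)) t)
      (((smooth_deriv (smooth_deriv hb)).differentiable (by simp)) t)]
  ring

lemma castD (f : ℝ → ℝ) (hf : ContDiff ℝ (⊤ : ℕ∞) f) :
    ∀ t, ((deriv f t : ℝ) : ℂ) = deriv (fun s => ((f s : ℝ) : ℂ)) t := fun t =>
  (((hf.differentiable (by simp) t).hasDerivAt).ofReal_comp).deriv.symm

lemma Ang_zero (g : ℝ → ℝ) (u : ℝ → ℂ) : Ang 0 g u = fun t => (g t : ℂ) * u t := by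
  funext t
  simp [Ang]
  ring

end helpers

theorem commutator_Ang_three_zero (f g : ℝ → ℝ) (hf : ContDiff ℝ (⊤ : ℕ∞) f) (hg : ContDiff ℝ (⊤ : ℕ∞) g)
    (u : ℝ → ℂ) (hu : ContDiff ℝ (⊤ : ℕ∞) u) (x : ℝ) :
    Ang 3 f (Ang 0 g u) x - Ang 0 g (Ang 3 f u) x =
      3 * Ang 2 (fun t => f t * deriv g t) u x
      - (1 / 2 : ℂ) *
          Ang 0 (fun t => 3 * deriv f t * iteratedDeriv 2 g t + f t * iteratedDeriv 3 g t) u x := by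
  have hf : ContDiff ℝ (⊤ : ℕ∞) f := hf.of_le (by simp)
  have hg : ContDiff ℝ (⊤ : ℕ∞) g := hg.of_le (by simp)
  have hu : ContDiff ℝ (⊤ : ℕ∞) u := hu.of_le (by simp)
  have hFc : ContDiff ℝ (⊤ : ℕ∞) (fun t => ((f t : ℝ) : ℂ)) := Complex.ofRealCLM.contDiff.comp hf
  have hGc : ContDiff ℝ (⊤ : ℕ∞) (fun t => ((g t : ℝ) : ℂ)) := Complex.ofRealCLM.contDiff.comp hg
  have hGc' := smooth_deriv hGc
  -- cast lemmas
  have hcf1 := castD f hf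
  have hcg1 := castD g hg
  have eg1 : (fun s => ((deriv g s : ℝ) : ℂ)) = deriv (fun s => ((g s : ℝ) : ℂ)) :=
    funext hcg1
  have hcg2 : ∀ t, ((deriv (deriv g) t : ℝ) : ℂ) = deriv (deriv (fun s => ((g s : ℝ) : ℂ))) t := by
    intro t
    rw [castD (deriv g) (smooth_derivR hg) t, eg1]
  have eg2 : (fun s => ((deriv (deriv g) s : ℝ) : ℂ)) = deriv (deriv (fun s => ((g s : ℝ) : ℂ))) :=
    funext hcg2
  have hcg3 : ∀ t, ((deriv (deriv (deriv g)) t : ℝ) : ℂ)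
      = deriv (deriv (deriv (fun s => ((g s : ℝ) : ℂ)))) t := by
    intro t
    rw [castD (deriv (deriv g)) (smooth_derivR (smooth_derivR hg)) t, eg2]
  -- structural rewrites
  rw [Ang_zero g u, Ang_zero g (Ang 3 f u),
    Ang_zero (fun t => 3 * deriv f t * iteratedDeriv 2 g t + f t * iteratedDeriv 3 g t) u]
  simp only [Ang, iteratedDeriv_succ, iteratedDeriv_zero]
  push_cast
  simp only [hcf1, hcg1, hcg2, hcg3]
  have A := D1 (fun t => ((g t : ℝ) : ℂ)) u hGc hu
  have B := D2 (fun t => ((g t : ℝ) : ℂ)) u hGc hu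
  have C := D3 (fun t => ((g t : ℝ) : ℂ)) u hGc hu
  have D := D3 (fun t => ((f t : ℝ) : ℂ)) (fun t => ((g t : ℝ) : ℂ) * u t) hFc (hGc.mul hu)
  have E := D3 (fun t => ((f t : ℝ) : ℂ)) u hFc hu
  have H := D2 (fun t => ((f t : ℝ) : ℂ) * deriv (fun s => ((g s : ℝ) : ℂ)) t) u
    (hFc.mul hGc') hu
  have I := D1 (fun t => ((f t : ℝ) : ℂ)) (deriv (fun s => ((g s : ℝ) : ℂ))) hFc hGc'
  have J := D2 (fun t => ((f t : ℝ) : ℂ)) (deriv (fun s => ((g s : ℝ) : ℂ))) hFc hGc'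
  simp only [D, E, H]
  simp only [C]
  simp only [B]
  simp only [A]
  simp only [J]
  simp only [I]
  ring
end

section
/- For all smooth functions f, g : ℝ → ℝ and every smooth u : ℝ → ℂ, [⟨f⟩₂, ⟨g⟩₂] u = 2·⟨f·g' − f'·g⟩₃ u + ⟨2·f''·g' − 2·f'·g'' + f'''·g − f·g'''⟩₁ u. -/
private lemma cg {E : Type*} [NormedAddCommGroup E] [NormedSpace ℝ E]
    {f : ℝ → E} {a b : E} {x : ℝ} (h : HasDerivAt f a x) (e : b = a) : HasDerivAt f b x := e ▸ h

private lemma id2 {E : Type*} [NormedAddCommGroup E] [NormedSpace ℝ E] (w : ℝ → E) :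
    iteratedDeriv 2 w = deriv (deriv w) := by
  rw [show (2:ℕ) = 1+1 from rfl, iteratedDeriv_succ, iteratedDeriv_one]

private lemma id3 {E : Type*} [NormedAddCommGroup E] [NormedSpace ℝ E] (w : ℝ → E) :
    iteratedDeriv 3 w = deriv (deriv (deriv w)) := by
  rw [show (3:ℕ) = 2+1 from rfl, iteratedDeriv_succ, id2]

private lemma angA (h0 h1 h2 : ℝ → ℝ) (w0 w1 w2 : ℝ → ℂ)
    (H0 : ∀ y, HasDerivAt h0 (h1 y) y) (H1 : ∀ y, HasDerivAt h1 (h2 y) y)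
    (W0 : ∀ y, HasDerivAt w0 (w1 y) y) (W1 : ∀ y, HasDerivAt w1 (w2 y) y) (x : ℝ) :
    Ang 2 h0 w0 x = (h0 x : ℂ) * w2 x + (h1 x : ℂ) * w1 x + (1/2 : ℂ) * (h2 x : ℂ) * w0 x := by
  have ew : deriv w0 = w1 := funext fun y => (W0 y).deriv
  have p1 : deriv (fun t => (h0 t : ℂ) * w0 t)
      = fun t => (h1 t : ℂ) * w0 t + (h0 t : ℂ) * w1 t :=
    funext fun y => (((H0 y).ofReal_comp).mul (W0 y)).deriv
  have p2 : deriv (fun t => (h1 t : ℂ) * w0 t + (h0 t : ℂ) * w1 t) x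
      = ((h2 x : ℂ) * w0 x + (h1 x : ℂ) * w1 x) + ((h1 x : ℂ) * w1 x + (h0 x : ℂ) * w2 x) :=
    ((((H1 x).ofReal_comp).mul (W0 x)).add (((H0 x).ofReal_comp).mul (W1 x))).deriv
  simp only [Ang, id2, ew, p1, p2, (W1 x).deriv]
  ring

private lemma angB (h0 h1 h2 h3 : ℝ → ℝ) (w0 w1 w2 w3 : ℝ → ℂ)
    (H0 : ∀ y, HasDerivAt h0 (h1 y) y) (H1 : ∀ y, HasDerivAt h1 (h2 y) y)
    (H2 : ∀ y, HasDerivAt h2 (h3 y) y)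
    (W0 : ∀ y, HasDerivAt w0 (w1 y) y) (W1 : ∀ y, HasDerivAt w1 (w2 y) y)
    (W2 : ∀ y, HasDerivAt w2 (w3 y) y) (x : ℝ) :
    Ang 3 h0 w0 x = (h0 x : ℂ) * w3 x + (3/2 : ℂ) * (h1 x : ℂ) * w2 x
      + (3/2 : ℂ) * (h2 x : ℂ) * w1 x + (1/2 : ℂ) * (h3 x : ℂ) * w0 x := by
  have ew0 : deriv w0 = w1 := funext fun y => (W0 y).deriv
  have ew1 : deriv w1 = w2 := funext fun y => (W1 y).deriv
  have p1 : deriv (fun t => (h0 t : ℂ) * w0 t)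
      = fun t => (h1 t : ℂ) * w0 t + (h0 t : ℂ) * w1 t :=
    funext fun y => (((H0 y).ofReal_comp).mul (W0 y)).deriv
  have p2 : deriv (fun t => (h1 t : ℂ) * w0 t + (h0 t : ℂ) * w1 t)
      = fun t => ((h2 t : ℂ) * w0 t + (h1 t : ℂ) * w1 t)
          + ((h1 t : ℂ) * w1 t + (h0 t : ℂ) * w2 t) :=
    funext fun y =>
      ((((H1 y).ofReal_comp).mul (W0 y)).add (((H0 y).ofReal_comp).mul (W1 y))).deriv
  have p3 : deriv (fun t => ((h2 t : ℂ) * w0 t + (h1 t : ℂ) * w1 t)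
          + ((h1 t : ℂ) * w1 t + (h0 t : ℂ) * w2 t)) x
      = (((h3 x : ℂ) * w0 x + (h2 x : ℂ) * w1 x) + ((h2 x : ℂ) * w1 x + (h1 x : ℂ) * w2 x))
        + (((h2 x : ℂ) * w1 x + (h1 x : ℂ) * w2 x) + ((h1 x : ℂ) * w2 x + (h0 x : ℂ) * w3 x)) :=
    (((((H2 x).ofReal_comp).mul (W0 x)).add (((H1 x).ofReal_comp).mul (W1 x))).add
      ((((H1 x).ofReal_comp).mul (W1 x)).add (((H0 x).ofReal_comp).mul (W2 x)))).deriv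
  simp only [Ang, id3, ew0, ew1, p1, p2, p3, (W2 x).deriv]
  ring

private lemma angC (h0 : ℝ → ℝ) (w0 : ℝ → ℂ) (a : ℝ) (b : ℂ) (x : ℝ)
    (H : HasDerivAt h0 a x) (W : HasDerivAt w0 b x) :
    Ang 1 h0 w0 x = (h0 x : ℂ) * b + (1/2 : ℂ) * (a : ℂ) * w0 x := by
  have p1 : deriv (fun t => (h0 t : ℂ) * w0 t) x = (a : ℂ) * w0 x + (h0 x : ℂ) * b :=
    ((H.ofReal_comp).mul W).deriv
  simp only [Ang, iteratedDeriv_one, W.deriv, p1]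
  ring

theorem commutator_Ang_two_two (f g : ℝ → ℝ) (hf : ContDiff ℝ (⊤ : ℕ∞) f) (hg : ContDiff ℝ (⊤ : ℕ∞) g)
    (u : ℝ → ℂ) (hu : ContDiff ℝ (⊤ : ℕ∞) u) (x : ℝ) :
    Ang 2 f (Ang 2 g u) x - Ang 2 g (Ang 2 f u) x =
      2 * Ang 3 (fun t => f t * deriv g t - deriv f t * g t) u x
      + Ang 1 (fun t => 2 * iteratedDeriv 2 f t * deriv g t - 2 * deriv f t * iteratedDeriv 2 g t
          + iteratedDeriv 3 f t * g t - f t * iteratedDeriv 3 g t) u x := by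
  have pf0 := contDiff_infty_iff_deriv.mp (hf.of_le (by simp))
  have pf1 := contDiff_infty_iff_deriv.mp pf0.2
  have pf2 := contDiff_infty_iff_deriv.mp pf1.2
  have pf3 := contDiff_infty_iff_deriv.mp pf2.2
  have pg0 := contDiff_infty_iff_deriv.mp (hg.of_le (by simp))
  have pg1 := contDiff_infty_iff_deriv.mp pg0.2
  have pg2 := contDiff_infty_iff_deriv.mp pg1.2
  have pg3 := contDiff_infty_iff_deriv.mp pg2.2
  have pu0 := contDiff_infty_iff_deriv.mp (hu.of_le (by simp))
  have pu1 := contDiff_infty_iff_deriv.mp pu0.2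
  have pu2 := contDiff_infty_iff_deriv.mp pu1.2
  have pu3 := contDiff_infty_iff_deriv.mp pu2.2
  have F0 : ∀ y, HasDerivAt f (deriv f y) y := fun y => (pf0.1 y).hasDerivAt
  have F1 : ∀ y, HasDerivAt (deriv f) (deriv (deriv f) y) y := fun y => (pf1.1 y).hasDerivAt
  have F2 : ∀ y, HasDerivAt (deriv (deriv f)) (deriv (deriv (deriv f)) y) y :=
    fun y => (pf2.1 y).hasDerivAt
  have F3 : ∀ y, HasDerivAt (deriv (deriv (deriv f))) (deriv (deriv (deriv (deriv f))) y) y :=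
    fun y => (pf3.1 y).hasDerivAt
  have G0 : ∀ y, HasDerivAt g (deriv g y) y := fun y => (pg0.1 y).hasDerivAt
  have G1 : ∀ y, HasDerivAt (deriv g) (deriv (deriv g) y) y := fun y => (pg1.1 y).hasDerivAt
  have G2 : ∀ y, HasDerivAt (deriv (deriv g)) (deriv (deriv (deriv g)) y) y :=
    fun y => (pg2.1 y).hasDerivAt
  have G3 : ∀ y, HasDerivAt (deriv (deriv (deriv g))) (deriv (deriv (deriv (deriv g))) y) y :=
    fun y => (pg3.1 y).hasDerivAt
  have U0 : ∀ y, HasDerivAt u (deriv u y) y := fun y => (pu0.1 y).hasDerivAt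
  have U1 : ∀ y, HasDerivAt (deriv u) (deriv (deriv u) y) y := fun y => (pu1.1 y).hasDerivAt
  have U2 : ∀ y, HasDerivAt (deriv (deriv u)) (deriv (deriv (deriv u)) y) y :=
    fun y => (pu2.1 y).hasDerivAt
  have U3 : ∀ y, HasDerivAt (deriv (deriv (deriv u))) (deriv (deriv (deriv (deriv u))) y) y :=
    fun y => (pu3.1 y).hasDerivAt
  have hvg : Ang 2 g u = fun t => (g t : ℂ) * deriv (deriv u) t + ((deriv g t : ℝ) : ℂ) * deriv u t
      + (1/2 : ℂ) * ((deriv (deriv g) t : ℝ) : ℂ) * u t :=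
    funext fun y => angA g (deriv g) (deriv (deriv g)) u (deriv u) (deriv (deriv u))
      G0 G1 U0 U1 y
  have hvf : Ang 2 f u = fun t => (f t : ℂ) * deriv (deriv u) t + ((deriv f t : ℝ) : ℂ) * deriv u t
      + (1/2 : ℂ) * ((deriv (deriv f) t : ℝ) : ℂ) * u t :=
    funext fun y => angA f (deriv f) (deriv (deriv f)) u (deriv u) (deriv (deriv u))
      F0 F1 U0 U1 y
  have HVg0 : ∀ y, HasDerivAt
      (fun t => (g t : ℂ) * deriv (deriv u) t + ((deriv g t : ℝ) : ℂ) * deriv u t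
        + (1/2 : ℂ) * ((deriv (deriv g) t : ℝ) : ℂ) * u t)
      ((g y : ℂ) * deriv (deriv (deriv u)) y + 2 * ((deriv g y : ℝ) : ℂ) * deriv (deriv u) y
        + (3/2 : ℂ) * ((deriv (deriv g) y : ℝ) : ℂ) * deriv u y
        + (1/2 : ℂ) * ((deriv (deriv (deriv g)) y : ℝ) : ℂ) * u y) y :=
    fun y => cg ((((G0 y).ofReal_comp.mul (U2 y)).add ((G1 y).ofReal_comp.mul (U1 y))).add
      (((G2 y).ofReal_comp.const_mul (1/2 : ℂ)).mul (U0 y))) (by ring)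
  have HVg1 : ∀ y, HasDerivAt
      (fun t => (g t : ℂ) * deriv (deriv (deriv u)) t + 2 * ((deriv g t : ℝ) : ℂ) * deriv (deriv u) t
        + (3/2 : ℂ) * ((deriv (deriv g) t : ℝ) : ℂ) * deriv u t
        + (1/2 : ℂ) * ((deriv (deriv (deriv g)) t : ℝ) : ℂ) * u t)
      ((g y : ℂ) * deriv (deriv (deriv (deriv u))) y
        + 3 * ((deriv g y : ℝ) : ℂ) * deriv (deriv (deriv u)) y
        + (7/2 : ℂ) * ((deriv (deriv g) y : ℝ) : ℂ) * deriv (deriv u) y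
        + 2 * ((deriv (deriv (deriv g)) y : ℝ) : ℂ) * deriv u y
        + (1/2 : ℂ) * ((deriv (deriv (deriv (deriv g))) y : ℝ) : ℂ) * u y) y :=
    fun y => cg (((((G0 y).ofReal_comp.mul (U3 y)).add
        (((G1 y).ofReal_comp.const_mul (2 : ℂ)).mul (U2 y))).add
        (((G2 y).ofReal_comp.const_mul (3/2 : ℂ)).mul (U1 y))).add
        (((G3 y).ofReal_comp.const_mul (1/2 : ℂ)).mul (U0 y))) (by ring)
  have HVf0 : ∀ y, HasDerivAt
      (fun t => (f t : ℂ) * deriv (deriv u) t + ((deriv f t : ℝ) : ℂ) * deriv u t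
        + (1/2 : ℂ) * ((deriv (deriv f) t : ℝ) : ℂ) * u t)
      ((f y : ℂ) * deriv (deriv (deriv u)) y + 2 * ((deriv f y : ℝ) : ℂ) * deriv (deriv u) y
        + (3/2 : ℂ) * ((deriv (deriv f) y : ℝ) : ℂ) * deriv u y
        + (1/2 : ℂ) * ((deriv (deriv (deriv f)) y : ℝ) : ℂ) * u y) y :=
    fun y => cg ((((F0 y).ofReal_comp.mul (U2 y)).add ((F1 y).ofReal_comp.mul (U1 y))).add
      (((F2 y).ofReal_comp.const_mul (1/2 : ℂ)).mul (U0 y))) (by ring)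
  have HVf1 : ∀ y, HasDerivAt
      (fun t => (f t : ℂ) * deriv (deriv (deriv u)) t + 2 * ((deriv f t : ℝ) : ℂ) * deriv (deriv u) t
        + (3/2 : ℂ) * ((deriv (deriv f) t : ℝ) : ℂ) * deriv u t
        + (1/2 : ℂ) * ((deriv (deriv (deriv f)) t : ℝ) : ℂ) * u t)
      ((f y : ℂ) * deriv (deriv (deriv (deriv u))) y
        + 3 * ((deriv f y : ℝ) : ℂ) * deriv (deriv (deriv u)) y
        + (7/2 : ℂ) * ((deriv (deriv f) y : ℝ) : ℂ) * deriv (deriv u) y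
        + 2 * ((deriv (deriv (deriv f)) y : ℝ) : ℂ) * deriv u y
        + (1/2 : ℂ) * ((deriv (deriv (deriv (deriv f))) y : ℝ) : ℂ) * u y) y :=
    fun y => cg (((((F0 y).ofReal_comp.mul (U3 y)).add
        (((F1 y).ofReal_comp.const_mul (2 : ℂ)).mul (U2 y))).add
        (((F2 y).ofReal_comp.const_mul (3/2 : ℂ)).mul (U1 y))).add
        (((F3 y).ofReal_comp.const_mul (1/2 : ℂ)).mul (U0 y))) (by ring)
  have Hh0 : ∀ y, HasDerivAt (fun t => f t * deriv g t - deriv f t * g t)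
      (f y * deriv (deriv g) y - deriv (deriv f) y * g y) y :=
    fun y => cg (((F0 y).mul (G1 y)).sub ((F1 y).mul (G0 y))) (by ring)
  have Hh1 : ∀ y, HasDerivAt (fun t => f t * deriv (deriv g) t - deriv (deriv f) t * g t)
      (f y * deriv (deriv (deriv g)) y + deriv f y * deriv (deriv g) y
        - deriv (deriv f) y * deriv g y - deriv (deriv (deriv f)) y * g y) y :=
    fun y => cg (((F0 y).mul (G2 y)).sub ((F2 y).mul (G0 y))) (by ring)
  have Hh2 : ∀ y, HasDerivAt
      (fun t => f t * deriv (deriv (deriv g)) t + deriv f t * deriv (deriv g) t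
        - deriv (deriv f) t * deriv g t - deriv (deriv (deriv f)) t * g t)
      (f y * deriv (deriv (deriv (deriv g))) y + 2 * deriv f y * deriv (deriv (deriv g)) y
        - 2 * deriv (deriv (deriv f)) y * deriv g y - deriv (deriv (deriv (deriv f))) y * g y) y :=
    fun y => cg (((((F0 y).mul (G3 y)).add ((F1 y).mul (G2 y))).sub
        ((F2 y).mul (G1 y))).sub ((F3 y).mul (G0 y))) (by ring)
  have Hk : HasDerivAt (fun t => 2 * deriv (deriv f) t * deriv g t
        - 2 * deriv f t * deriv (deriv g) t
        + deriv (deriv (deriv f)) t * g t - f t * deriv (deriv (deriv g)) t)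
      (3 * deriv (deriv (deriv f)) x * deriv g x - 3 * deriv f x * deriv (deriv (deriv g)) x
        + deriv (deriv (deriv (deriv f))) x * g x - f x * deriv (deriv (deriv (deriv g))) x) x :=
    cg ((((((F2 x).const_mul (2 : ℝ)).mul (G1 x)).sub
        (((F1 x).const_mul (2 : ℝ)).mul (G2 x))).add ((F3 x).mul (G0 x))).sub
        ((F0 x).mul (G3 x))) (by ring)
  have e2f : iteratedDeriv 2 f = deriv (deriv f) := id2 f
  have e3f : iteratedDeriv 3 f = deriv (deriv (deriv f)) := id3 f
  have e2g : iteratedDeriv 2 g = deriv (deriv g) := id2 g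
  have e3g : iteratedDeriv 3 g = deriv (deriv (deriv g)) := id3 g
  simp only [e2f, e3f, e2g, e3g]
  rw [hvg, hvf,
    angA f (deriv f) (deriv (deriv f)) _ _ _ F0 F1 HVg0 HVg1 x,
    angA g (deriv g) (deriv (deriv g)) _ _ _ G0 G1 HVf0 HVf1 x,
    angB _ _ _ _ u (deriv u) (deriv (deriv u)) (deriv (deriv (deriv u)))
      Hh0 Hh1 Hh2 U0 U1 U2 x,
    angC _ u _ _ x Hk (U0 x)]
  push_cast
  ring
end

section
/- For all smooth functions f, g : ℝ → ℝ and every smooth u : ℝ → ℂ, [⟨f⟩₂, ⟨g⟩₁] u = ⟨2·f·g' − f'·g⟩₂ u − (1/2)·⟨2·f'·g'' + f·g'''⟩₀ u. -/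
open scoped ContDiff
private lemma cdD_s9 {𝕜 : Type*} [NontriviallyNormedField 𝕜] {F : Type*}
    [NormedAddCommGroup F] [NormedSpace 𝕜 F] {u : 𝕜 → F}
    (hu : ContDiff 𝕜 ∞ u) : ContDiff 𝕜 ∞ (deriv u) :=
  (contDiff_infty_iff_deriv.mp hu).2

private lemma hdC {𝕜 : Type*} [NontriviallyNormedField 𝕜] {F : Type*}
    [NormedAddCommGroup F] [NormedSpace 𝕜 F] {u : 𝕜 → F}
    (hu : Differentiable 𝕜 u) (x : 𝕜) : HasDerivAt u (deriv u x) x :=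
  (hu x).hasDerivAt

private lemma hdR {f : ℝ → ℝ} (hf : Differentiable ℝ f) (x : ℝ) :
    HasDerivAt (fun t : ℝ => (f t : ℂ)) ((deriv f x : ℝ) : ℂ) x :=
  (hf x).hasDerivAt.ofReal_comp

private lemma ofR {f : ℝ → ℝ} (hf : ContDiff ℝ ∞ f) :
    ContDiff ℝ ∞ (fun t : ℝ => (f t : ℂ)) :=
  Complex.ofRealCLM.contDiff.comp hf

private lemma itd2 {F : Type*} [NormedAddCommGroup F] [NormedSpace ℝ F] (v : ℝ → F) :
    iteratedDeriv 2 v = deriv (deriv v) := by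
  rw [show (2 : ℕ) = 1 + 1 from rfl, iteratedDeriv_succ, iteratedDeriv_one]

private lemma itd3 {F : Type*} [NormedAddCommGroup F] [NormedSpace ℝ F] (v : ℝ → F) :
    iteratedDeriv 3 v = deriv (deriv (deriv v)) := by
  rw [show (3 : ℕ) = 2 + 1 from rfl, iteratedDeriv_succ, itd2]

private lemma ang0 (f : ℝ → ℝ) (u : ℝ → ℂ) (x : ℝ) :
    Ang 0 f u x = (f x : ℂ) * u x := by
  simp [Ang, iteratedDeriv_zero]; ring

private lemma ang1 (f : ℝ → ℝ) (hf : ContDiff ℝ ∞ f) (u : ℝ → ℂ) (hu : ContDiff ℝ ∞ u)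
    (x : ℝ) :
    Ang 1 f u x = (f x : ℂ) * deriv u x + (1 / 2 : ℂ) * (((deriv f x : ℝ) : ℂ) * u x) := by
  have hfd : Differentiable ℝ f := hf.differentiable (by norm_num)
  have hud : Differentiable ℝ u := hu.differentiable (by norm_num)
  have h1 : deriv (fun t : ℝ => (f t : ℂ) * u t) x
      = ((deriv f x : ℝ) : ℂ) * u x + (f x : ℂ) * deriv u x :=
    ((hdR hfd x).mul (hdC hud x)).deriv
  simp only [Ang, iteratedDeriv_one, h1]
  ring

private lemma ang2 (f : ℝ → ℝ) (hf : ContDiff ℝ ∞ f) (u : ℝ → ℂ) (hu : ContDiff ℝ ∞ u)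
    (x : ℝ) :
    Ang 2 f u x = (f x : ℂ) * deriv (deriv u) x + ((deriv f x : ℝ) : ℂ) * deriv u x
      + (1 / 2 : ℂ) * (((deriv (deriv f) x : ℝ) : ℂ) * u x) := by
  have hfd : Differentiable ℝ f := hf.differentiable (by norm_num)
  have hf1d : Differentiable ℝ (deriv f) := (cdD_s9 hf).differentiable (by norm_num)
  have hud : Differentiable ℝ u := hu.differentiable (by norm_num)
  have hu1d : Differentiable ℝ (deriv u) := (cdD_s9 hu).differentiable (by norm_num)
  have h1 : deriv (fun t : ℝ => (f t : ℂ) * u t)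
      = fun t => ((deriv f t : ℝ) : ℂ) * u t + (f t : ℂ) * deriv u t :=
    funext fun t => ((hdR hfd t).mul (hdC hud t)).deriv
  have h2 : deriv (deriv (fun t : ℝ => (f t : ℂ) * u t)) x
      = (((deriv (deriv f) x : ℝ) : ℂ) * u x + ((deriv f x : ℝ) : ℂ) * deriv u x)
        + (((deriv f x : ℝ) : ℂ) * deriv u x + (f x : ℂ) * deriv (deriv u) x) := by
    rw [h1]
    exact (((hdR hf1d x).mul (hdC hud x)).add ((hdR hfd x).mul (hdC hu1d x))).deriv
  simp only [Ang, itd2, h2]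
  ring

theorem commutator_Ang_two_one (f g : ℝ → ℝ) (hf : ContDiff ℝ (⊤ : ℕ∞) f) (hg : ContDiff ℝ (⊤ : ℕ∞) g)
    (u : ℝ → ℂ) (hu : ContDiff ℝ (⊤ : ℕ∞) u) (x : ℝ) :
    Ang 2 f (Ang 1 g u) x - Ang 1 g (Ang 2 f u) x =
      Ang 2 (fun t => 2 * f t * deriv g t - deriv f t * g t) u x
      - (1 / 2 : ℂ) *
          Ang 0 (fun t => 2 * deriv f t * iteratedDeriv 2 g t + f t * iteratedDeriv 3 g t) u x := by
  replace hf : ContDiff ℝ ∞ f := hf.of_le (by simp)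
  replace hg : ContDiff ℝ ∞ g := hg.of_le (by simp)
  replace hu : ContDiff ℝ ∞ u := hu.of_le (by simp)
  have hf1 := cdD_s9 hf; have hf2 := cdD_s9 hf1
  have hg1 := cdD_s9 hg; have hg2 := cdD_s9 hg1
  have hu1 := cdD_s9 hu; have hu2 := cdD_s9 hu1
  have hfd : Differentiable ℝ f := hf.differentiable (by norm_num)
  have hf1d : Differentiable ℝ (deriv f) := hf1.differentiable (by norm_num)
  have hf2d : Differentiable ℝ (deriv (deriv f)) := hf2.differentiable (by norm_num)
  have hgd : Differentiable ℝ g := hg.differentiable (by norm_num)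
  have hg1d : Differentiable ℝ (deriv g) := hg1.differentiable (by norm_num)
  have hg2d : Differentiable ℝ (deriv (deriv g)) := hg2.differentiable (by norm_num)
  have hud : Differentiable ℝ u := hu.differentiable (by norm_num)
  have hu1d : Differentiable ℝ (deriv u) := hu1.differentiable (by norm_num)
  have hu2d : Differentiable ℝ (deriv (deriv u)) := hu2.differentiable (by norm_num)
  -- w := Ang 1 g u
  have hw : Ang 1 g u = fun t => (g t : ℂ) * deriv u t
      + (1 / 2 : ℂ) * (((deriv g t : ℝ) : ℂ) * u t) := funext fun t => ang1 g hg u hu t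
  have hwS : ContDiff ℝ ∞ (Ang 1 g u) := by
    rw [hw]
    exact ((ofR hg).mul hu1).add (contDiff_const.mul ((ofR hg1).mul hu))
  have hw1 : deriv (Ang 1 g u) = fun t => (g t : ℂ) * deriv (deriv u) t
      + (3 / 2 : ℂ) * (((deriv g t : ℝ) : ℂ) * deriv u t)
      + (1 / 2 : ℂ) * (((deriv (deriv g) t : ℝ) : ℂ) * u t) := by
    rw [hw]
    exact funext fun t =>
      (((hdR hgd t).mul (hdC hu1d t)).add
        (((hdR hg1d t).mul (hdC hud t)).const_mul (1 / 2 : ℂ))).deriv.trans (by ring)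
  have hw2x : deriv (deriv (Ang 1 g u)) x = (g x : ℂ) * deriv (deriv (deriv u)) x
      + (5 / 2 : ℂ) * (((deriv g x : ℝ) : ℂ) * deriv (deriv u) x)
      + 2 * (((deriv (deriv g) x : ℝ) : ℂ) * deriv u x)
      + (1 / 2 : ℂ) * (((deriv (deriv (deriv g)) x : ℝ) : ℂ) * u x) := by
    rw [hw1]
    exact ((((hdR hgd x).mul (hdC hu2d x)).add
        (((hdR hg1d x).mul (hdC hu1d x)).const_mul (3 / 2 : ℂ))).add
        (((hdR hg2d x).mul (hdC hud x)).const_mul (1 / 2 : ℂ))).deriv.trans (by ring)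
  -- v := Ang 2 f u
  have hv : Ang 2 f u = fun t => (f t : ℂ) * deriv (deriv u) t
      + ((deriv f t : ℝ) : ℂ) * deriv u t
      + (1 / 2 : ℂ) * (((deriv (deriv f) t : ℝ) : ℂ) * u t) := funext fun t => ang2 f hf u hu t
  have hvS : ContDiff ℝ ∞ (Ang 2 f u) := by
    rw [hv]
    exact (((ofR hf).mul hu2).add ((ofR hf1).mul hu1)).add
      (contDiff_const.mul ((ofR hf2).mul hu))
  have hv1x : deriv (Ang 2 f u) x = (f x : ℂ) * deriv (deriv (deriv u)) x
      + 2 * (((deriv f x : ℝ) : ℂ) * deriv (deriv u) x)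
      + (3 / 2 : ℂ) * (((deriv (deriv f) x : ℝ) : ℂ) * deriv u x)
      + (1 / 2 : ℂ) * (((deriv (deriv (deriv f)) x : ℝ) : ℂ) * u x) := by
    rw [hv]
    exact ((((hdR hfd x).mul (hdC hu2d x)).add
        ((hdR hf1d x).mul (hdC hu1d x))).add
        (((hdR hf2d x).mul (hdC hud x)).const_mul (1 / 2 : ℂ))).deriv.trans (by ring)
  -- h := 2 f g' - f' g
  have hhS : ContDiff ℝ ∞ (fun t => 2 * f t * deriv g t - deriv f t * g t) :=
    ((contDiff_const.mul hf).mul hg1).sub (hf1.mul hg)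
  have hH1 : deriv (fun t => 2 * f t * deriv g t - deriv f t * g t)
      = fun t => 2 * deriv f t * deriv g t + 2 * f t * deriv (deriv g) t
        - deriv (deriv f) t * g t - deriv f t * deriv g t :=
    funext fun t =>
      ((((hdC hfd t).const_mul (2 : ℝ)).mul (hdC hg1d t)).sub
        ((hdC hf1d t).mul (hdC hgd t))).deriv.trans (by ring)
  have hH2x : deriv (deriv (fun t => 2 * f t * deriv g t - deriv f t * g t)) x
      = 3 * deriv f x * deriv (deriv g) x + 2 * f x * deriv (deriv (deriv g)) x
        - deriv (deriv (deriv f)) x * g x := by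
    rw [hH1]
    exact ((((((hdC hf1d x).const_mul (2 : ℝ)).mul (hdC hg1d x)).add
        (((hdC hfd x).const_mul (2 : ℝ)).mul (hdC hg2d x))).sub
        ((hdC hf2d x).mul (hdC hgd x))).sub
        ((hdC hf1d x).mul (hdC hg1d x))).deriv.trans (by ring)
  rw [ang2 f hf (Ang 1 g u) hwS x, ang1 g hg (Ang 2 f u) hvS x,
    ang2 (fun t => 2 * f t * deriv g t - deriv f t * g t) hhS u hu x,
    ang0 (fun t => 2 * deriv f t * iteratedDeriv 2 g t + f t * iteratedDeriv 3 g t) u x,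
    hw2x, hv1x, hH2x, itd2 g, itd3 g]
  simp only [congrFun hw x, congrFun hv x, congrFun hw1 x, congrFun hH1 x]
  push_cast
  ring
end

section
/- For all smooth functions f, g : ℝ → ℝ and every smooth u : ℝ → ℂ, [⟨f⟩₂, ⟨g⟩₀] u = 2·⟨f·g'⟩₁ u. -/
open scoped ContDiff


private lemma diff_deriv {𝕜 : Type*} [NontriviallyNormedField 𝕜] {F : Type*}
    [NormedAddCommGroup F] [NormedSpace 𝕜 F] {a : 𝕜 → F} (ha : ContDiff 𝕜 ∞ a) :
    Differentiable 𝕜 (deriv a) :=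
  ((contDiff_infty_iff_deriv.mp ha).2).differentiable (by simp)

private lemma deriv_mul_fun (a b : ℝ → ℂ) (ha : Differentiable ℝ a) (hb : Differentiable ℝ b) :
    deriv (fun t => a t * b t) = fun t => deriv a t * b t + a t * deriv b t :=
  funext fun x => deriv_mul (ha x) (hb x)

private lemma iteratedDeriv_two_mul (a b : ℝ → ℂ) (ha : ContDiff ℝ ∞ a) (hb : ContDiff ℝ ∞ b) :
    iteratedDeriv 2 (fun t => a t * b t) = fun t =>
      deriv (deriv a) t * b t + 2 * deriv a t * deriv b t + a t * deriv (deriv b) t := by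
  have ha' := ha.differentiable (by simp)
  have hb' := hb.differentiable (by simp)
  have hda := diff_deriv ha
  have hdb := diff_deriv hb
  funext x
  rw [iteratedDeriv_succ, iteratedDeriv_one, deriv_mul_fun a b ha' hb']
  rw [deriv_fun_add (f := fun t => deriv a t * b t) (g := fun t => a t * deriv b t) ((hda.mul hb').differentiableAt) ((ha'.mul hdb).differentiableAt),
    deriv_fun_mul (hda x) (hb' x), deriv_fun_mul (ha' x) (hdb x)]
  ring

theorem commutator_Ang_two_zero (f g : ℝ → ℝ) (hf : ContDiff ℝ (⊤ : ℕ∞) f) (hg : ContDiff ℝ (⊤ : ℕ∞) g)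
    (u : ℝ → ℂ) (hu : ContDiff ℝ (⊤ : ℕ∞) u) (x : ℝ) :
    Ang 2 f (Ang 0 g u) x - Ang 0 g (Ang 2 f u) x =
      2 * Ang 1 (fun t => f t * deriv g t) u x := by
  set F : ℝ → ℂ := fun t => (f t : ℂ) with hFdef
  set G : ℝ → ℂ := fun t => (g t : ℂ) with hGdef
  set H : ℝ → ℂ := fun t => ((deriv g t : ℝ) : ℂ) with hHdef
  have hF : ContDiff ℝ ∞ F := (Complex.ofRealCLM.contDiff.comp hf).of_le (by simp)
  have hG : ContDiff ℝ ∞ G := (Complex.ofRealCLM.contDiff.comp hg).of_le (by simp)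
  have hu : ContDiff ℝ ∞ u := hu.of_le (by simp)
  have hH : ContDiff ℝ ∞ H := (Complex.ofRealCLM.contDiff.of_le le_top).comp
    (contDiff_infty_iff_deriv.mp (hg.of_le (by simp))).2
  have hinf' : (⊤:WithTop ℕ∞) ≠ 0 := by simp
  have hdGH : deriv G = H := funext fun t =>
    ((hg.differentiable (by simp) t).hasDerivAt.ofReal_comp).deriv
  have hinf : (∞:WithTop ℕ∞) ≠ 0 := by simp
  have hF' := hF.differentiable hinf
  have hG' := hG.differentiable hinf
  have hH' := hH.differentiable hinf
  have hu' := hu.differentiable hinf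
  have hdu := diff_deriv hu
  -- Ang 0 is multiplication
  have h0 : Ang 0 g u = fun t => G t * u t := by
    funext t; simp [Ang]; ring
  have h0' : Ang 0 g (Ang 2 f u) = fun t => G t * Ang 2 f u t := by
    funext t; simp [Ang]; ring
  have hGu : ContDiff ℝ ∞ (fun t => G t * u t) := hG.mul hu
  have e1 : iteratedDeriv 2 (fun t => G t * u t) x =
      deriv H x * u x + 2 * H x * deriv u x + G x * deriv (deriv u) x := by
    rw [iteratedDeriv_two_mul G u hG hu, hdGH]
  have e2 : iteratedDeriv 2 (fun t => F t * (G t * u t)) x =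
      deriv (deriv F) x * (G x * u x) + 2 * deriv F x * (H x * u x + G x * deriv u x)
        + F x * (deriv H x * u x + H x * deriv u x + (H x * deriv u x + G x * deriv (deriv u) x)) := by
    rw [iteratedDeriv_two_mul F (fun t => G t * u t) hF hGu]
    rw [deriv_mul_fun G u hG' hu', hdGH]
    rw [show deriv (fun t => H t * u t + G t * deriv u t)
        = fun t => (deriv H t * u t + H t * deriv u t)
            + (deriv G t * deriv u t + G t * deriv (deriv u) t) from
      funext fun t => by
        rw [deriv_fun_add (f := fun t => H t * u t) (g := fun t => G t * deriv u t) ((hH'.mul hu').differentiableAt) ((hG'.mul hdu).differentiableAt),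
          deriv_fun_mul (hH' t) (hu' t), deriv_fun_mul (hG' t) (hdu t)]]
    rw [hdGH]
  have e3 : iteratedDeriv 2 (fun t => F t * u t) x =
      deriv (deriv F) x * u x + 2 * deriv F x * deriv u x + F x * deriv (deriv u) x := by
    rw [iteratedDeriv_two_mul F u hF hu]
  have e4 : iteratedDeriv 1 (fun t => ((f t * deriv g t : ℝ) : ℂ) * u t) x =
      (deriv F x * H x + F x * deriv H x) * u x + F x * H x * deriv u x := by
    have : (fun t => ((f t * deriv g t : ℝ) : ℂ) * u t) = fun t => F t * H t * u t := by
      funext t; push_cast; ring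
    rw [this, iteratedDeriv_one,
      deriv_mul_fun (fun t => F t * H t) u (hF'.mul hH') hu',
      deriv_mul_fun F H hF' hH']
  rw [h0, h0']
  simp only [Ang, iteratedDeriv_succ, iteratedDeriv_one, iteratedDeriv_zero] at e1 e2 e3 e4 ⊢
  rw [e1, e2, e3, e4]
  push_cast
  ring
end

section
/- Height reduction: for all natural numbers k, l with k + l ≥ 1 and all smooth functions f, g : ℝ → ℝ, there exist smooth functions c_0, ..., c_{k+l−1} : ℝ → ℝ such that for every smooth u : ℝ → ℂ, [⟨f⟩ₖ, ⟨g⟩ₗ] u = Σ_{j=0}^{k+l−1} c_j · u^{(j)}; that is, the commutator of ⟨f⟩ₖ and ⟨g⟩ₗ is a differential operator of order at most k + l − 1. -/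
open Finset

lemma smooth_deriv_s13 {F : Type*} [NormedAddCommGroup F] [NormedSpace ℝ F] {f : ℝ → F}
    (hf : ContDiff ℝ (⊤ : ℕ∞) f) : ContDiff ℝ (⊤ : ℕ∞) (deriv f) := by
  have h : ContDiff ℝ (((⊤ : ℕ∞) : WithTop ℕ∞) + 1) f := by
    rw [← WithTop.coe_one, ← WithTop.coe_add, top_add]; exact hf
  exact (contDiff_succ_iff_deriv.mp h).2.2

lemma smooth_iteratedDeriv {F : Type*} [NormedAddCommGroup F] [NormedSpace ℝ F] {f : ℝ → F}
    (hf : ContDiff ℝ (⊤ : ℕ∞) f) (n : ℕ) : ContDiff ℝ (⊤ : ℕ∞) (iteratedDeriv n f) := by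
  induction n with
  | zero => simpa [iteratedDeriv_zero]
  | succ n ih => rw [iteratedDeriv_succ]; exact smooth_deriv_s13 ih

lemma iteratedDeriv_ofReal {f : ℝ → ℝ} (hf : ContDiff ℝ (⊤ : ℕ∞) f) (n : ℕ) :
    iteratedDeriv n (fun x => (f x : ℂ)) = fun x => Complex.ofReal (iteratedDeriv n f x) := by
  induction n with
  | zero => simp
  | succ n ih =>
    rw [iteratedDeriv_succ, ih, iteratedDeriv_succ]
    funext x
    exact (((smooth_iteratedDeriv hf n).differentiable (by simp) x).hasDerivAt.ofReal_comp).deriv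

lemma iteratedDeriv_add' {f g : ℝ → ℂ} (hf : ContDiff ℝ (⊤ : ℕ∞) f) (hg : ContDiff ℝ (⊤ : ℕ∞) g)
    (n : ℕ) (x : ℝ) :
    iteratedDeriv n (fun y => f y + g y) x = iteratedDeriv n f x + iteratedDeriv n g x := by
  have h1 : ContDiff ℝ n f := hf.of_le (by exact_mod_cast le_top)
  have h2 : ContDiff ℝ n g := hg.of_le (by exact_mod_cast le_top)
  simp only [iteratedDeriv_eq_iteratedFDeriv]
  rw [show (fun y => f y + g y) = f + g from rfl, iteratedFDeriv_add_apply h1.contDiffAt h2.contDiffAt]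
  rfl

lemma iteratedDeriv_fun_sum' {ι : Type*} [DecidableEq ι] (s : Finset ι) (F : ι → ℝ → ℂ)
    (h : ∀ i ∈ s, ContDiff ℝ (⊤ : ℕ∞) (F i)) (n : ℕ) (x : ℝ) :
    iteratedDeriv n (fun y => ∑ i ∈ s, F i y) x = ∑ i ∈ s, iteratedDeriv n (F i) x := by
  induction s using Finset.induction with
  | empty =>
    simp only [Finset.sum_empty]
    have h0 : iteratedDeriv n (fun _ : ℝ => (0:ℂ)) = fun _ => 0 := by
      rw [iteratedDeriv_eq_iterate]
      exact Function.iterate_fixed (by funext y; simp) n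
    rw [h0]
  | insert _ _ hni ih =>
    rename_i a s'
    rw [Finset.sum_insert hni]
    have hs' : ∀ i ∈ s', ContDiff ℝ (⊤ : ℕ∞) (F i) := fun i hi => h i (Finset.mem_insert_of_mem hi)
    have : (fun y => ∑ i ∈ insert a s', F i y) = fun y => F a y + ∑ i ∈ s', F i y := by
      funext y; rw [Finset.sum_insert hni]
    rw [this, iteratedDeriv_add' (h a (Finset.mem_insert_self a s'))
      (ContDiff.sum hs') n x, ih hs']

lemma iteratedDeriv_iteratedDeriv (u : ℝ → ℂ) (p j : ℕ) :
    iteratedDeriv p (iteratedDeriv j u) = iteratedDeriv (p + j) u := by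
  induction p with
  | zero => simp
  | succ p ih => rw [iteratedDeriv_succ, ih, Nat.add_right_comm, iteratedDeriv_succ]

lemma leibniz {a u : ℝ → ℂ} (ha : ContDiff ℝ (⊤ : ℕ∞) a) (hu : ContDiff ℝ (⊤ : ℕ∞) u) :
    ∀ (n : ℕ) (x : ℝ), iteratedDeriv n (fun y => a y * u y) x =
      ∑ i ∈ range (n+1), (n.choose i : ℂ) * iteratedDeriv (n-i) a x * iteratedDeriv i u x := by
  intro n
  induction n with
  | zero => intro x; simp
  | succ n ih =>
    intro x
    have hfun : iteratedDeriv n (fun y => a y * u y) = fun y =>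
        ∑ i ∈ range (n+1), (n.choose i : ℂ) * iteratedDeriv (n-i) a y * iteratedDeriv i u y :=
      funext ih
    have hda : ∀ m, DifferentiableAt ℝ (iteratedDeriv m a) x := fun m =>
      ((smooth_iteratedDeriv ha m).differentiable (by simp)).differentiableAt
    have hdu : ∀ m, DifferentiableAt ℝ (iteratedDeriv m u) x := fun m =>
      ((smooth_iteratedDeriv hu m).differentiable (by simp)).differentiableAt
    rw [iteratedDeriv_succ, hfun, deriv_fun_sum (fun i _ => (((hda (n-i)).const_mul _).fun_mul (hdu i)))]
    have hterm : ∀ i ∈ range (n+1),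
        deriv (fun y => (n.choose i : ℂ) * iteratedDeriv (n-i) a y * iteratedDeriv i u y) x =
          (n.choose i : ℂ) * iteratedDeriv (n+1-i) a x * iteratedDeriv i u x
          + (n.choose i : ℂ) * iteratedDeriv (n-i) a x * iteratedDeriv (i+1) u x := by
      intro i hi
      have hle : i ≤ n := Nat.lt_succ_iff.mp (mem_range.mp hi)
      have hsub : n + 1 - i = (n - i) + 1 := by omega
      rw [deriv_fun_mul ((hda (n-i)).const_mul _) (hdu i), deriv_const_mul _ (hda (n-i)),
        ← iteratedDeriv_succ, ← iteratedDeriv_succ, hsub]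
    rw [sum_congr rfl hterm, sum_add_distrib]
    have hS1 : ∑ i ∈ range (n+1),
        (n.choose i : ℂ) * iteratedDeriv (n+1-i) a x * iteratedDeriv i u x
        = iteratedDeriv (n+1) a x * iteratedDeriv 0 u x
          + ∑ i ∈ range (n+1),
            (n.choose (i+1) : ℂ) * iteratedDeriv (n-i) a x * iteratedDeriv (i+1) u x := by
      rw [Finset.sum_range_succ'
        (fun i => (n.choose i : ℂ) * iteratedDeriv (n+1-i) a x * iteratedDeriv i u x) n,
        Finset.sum_range_succ
        (fun i => (n.choose (i+1) : ℂ) * iteratedDeriv (n-i) a x * iteratedDeriv (i+1) u x) n]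
      simp [Nat.choose_succ_self, Nat.succ_sub_succ]
      ring
    rw [hS1]
    rw [Finset.sum_range_succ'
      (fun i => ((n+1).choose i : ℂ) * iteratedDeriv (n+1-i) a x * iteratedDeriv i u x) (n+1)]
    simp only [Nat.succ_sub_succ, Nat.choose_zero_right, Nat.cast_one, one_mul, Nat.sub_zero]
    have hps : ∑ i ∈ range (n+1),
        (((n+1).choose (i+1) : ℂ)) * iteratedDeriv (n-i) a x * iteratedDeriv (i+1) u x
        = ∑ i ∈ range (n+1),
          ((n.choose (i+1) : ℂ) * iteratedDeriv (n-i) a x * iteratedDeriv (i+1) u x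
            + (n.choose i : ℂ) * iteratedDeriv (n-i) a x * iteratedDeriv (i+1) u x) :=
      Finset.sum_congr rfl fun i _ => by rw [Nat.choose_succ_succ]; push_cast; ring
    rw [hps, Finset.sum_add_distrib]
    ring

/-- Coefficients of the operator `⟨f⟩ₖ` as a differential operator. -/
noncomputable def angC_s13 (k : ℕ) (f : ℝ → ℝ) (i : ℕ) : ℝ → ℝ :=
  if i = k then f else fun x => (1/2 : ℝ) * (k.choose i : ℝ) * iteratedDeriv (k - i) f x

lemma angC_smooth (k : ℕ) (f : ℝ → ℝ) (hf : ContDiff ℝ (⊤ : ℕ∞) f) (i : ℕ) :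
    ContDiff ℝ (⊤ : ℕ∞) (angC_s13 k f i) := by
  unfold angC_s13
  split
  · exact hf
  · exact contDiff_const.mul (smooth_iteratedDeriv hf _)

lemma ofReal_smooth {f : ℝ → ℝ} (hf : ContDiff ℝ (⊤ : ℕ∞) f) :
    ContDiff ℝ (⊤ : ℕ∞) (fun x => (f x : ℂ)) :=
  Complex.ofRealCLM.contDiff.comp hf

lemma ang_rep (k : ℕ) (f : ℝ → ℝ) (hf : ContDiff ℝ (⊤ : ℕ∞) f) {u : ℝ → ℂ}
    (hu : ContDiff ℝ (⊤ : ℕ∞) u) (x : ℝ) :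
    Ang k f u x = ∑ i ∈ range (k+1), (angC_s13 k f i x : ℂ) * iteratedDeriv i u x := by
  unfold Ang
  rw [leibniz (ofReal_smooth hf) hu k x]
  simp only [iteratedDeriv_ofReal hf]
  rw [Finset.sum_range_succ, Finset.sum_range_succ]
  have hS : ∑ i ∈ range k, (angC_s13 k f i x : ℂ) * iteratedDeriv i u x
      = ∑ i ∈ range k, (1/2 : ℂ) *
        ((k.choose i : ℂ) * Complex.ofReal (iteratedDeriv (k-i) f x) * iteratedDeriv i u x) := by
    refine Finset.sum_congr rfl fun i hi => ?_
    have hne : i ≠ k := (mem_range.mp hi).ne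
    simp only [angC_s13, if_neg hne]
    push_cast
    ring
  rw [hS, ← Finset.mul_sum, show angC_s13 k f k = f from if_pos rfl,
    Nat.sub_self, Nat.choose_self, iteratedDeriv_zero]
  push_cast
  ring

/-- Coefficients of the composition of two differential operators. -/
noncomputable def compC (k l : ℕ) (a b : ℕ → ℝ → ℝ) (m : ℕ) : ℝ → ℝ := fun x =>
  ∑ i ∈ range (k+1), ∑ j ∈ range (l+1), ∑ p ∈ range (i+1),
    if p + j = m then (i.choose p : ℝ) * a i x * iteratedDeriv (i-p) (b j) x else 0

lemma compC_smooth (k l : ℕ) (a b : ℕ → ℝ → ℝ) (ha : ∀ i, ContDiff ℝ (⊤ : ℕ∞) (a i))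
    (hb : ∀ j, ContDiff ℝ (⊤ : ℕ∞) (b j)) (m : ℕ) : ContDiff ℝ (⊤ : ℕ∞) (compC k l a b m) := by
  unfold compC
  apply ContDiff.sum; intro i _
  apply ContDiff.sum; intro j _
  apply ContDiff.sum; intro p _
  by_cases hc : p + j = m
  · simp only [hc, if_true]
    exact (contDiff_const.mul (ha i)).mul (smooth_iteratedDeriv (hb j) _)
  · simp only [hc, if_false]
    exact contDiff_const

lemma comp_rep (k l : ℕ) (a b : ℕ → ℝ → ℝ) (ha : ∀ i, ContDiff ℝ (⊤ : ℕ∞) (a i))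
    (hb : ∀ j, ContDiff ℝ (⊤ : ℕ∞) (b j)) {u : ℝ → ℂ} (hu : ContDiff ℝ (⊤ : ℕ∞) u) (x : ℝ) :
    ∑ i ∈ range (k+1), (a i x : ℂ) *
        iteratedDeriv i (fun y => ∑ j ∈ range (l+1), (b j y : ℂ) * iteratedDeriv j u y) x
      = ∑ m ∈ range (k+l+1), (compC k l a b m x : ℂ) * iteratedDeriv m u x := by
  have hsm : ∀ j, ContDiff ℝ (⊤ : ℕ∞) (fun y => (b j y : ℂ) * iteratedDeriv j u y) := fun j =>
    (ofReal_smooth (hb j)).mul (smooth_iteratedDeriv hu j)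
  have h1 : ∀ i, iteratedDeriv i
      (fun y => ∑ j ∈ range (l+1), (b j y : ℂ) * iteratedDeriv j u y) x
      = ∑ j ∈ range (l+1), ∑ p ∈ range (i+1),
          (i.choose p : ℂ) * Complex.ofReal (iteratedDeriv (i-p) (b j) x) * iteratedDeriv (p+j) u x := by
    intro i
    rw [iteratedDeriv_fun_sum' _ _ (fun j _ => hsm j)]
    refine Finset.sum_congr rfl fun j _ => ?_
    rw [leibniz (ofReal_smooth (hb j)) (smooth_iteratedDeriv hu j) i x]
    refine Finset.sum_congr rfl fun p _ => ?_
    rw [iteratedDeriv_ofReal (hb j), iteratedDeriv_iteratedDeriv]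
  simp only [h1]
  -- LHS : quadruple sum with m introduced
  have hterm : ∀ i ∈ range (k+1), ∀ j ∈ range (l+1), ∀ p ∈ range (i+1),
      (a i x : ℂ) * ((i.choose p : ℂ) * Complex.ofReal (iteratedDeriv (i-p) (b j) x)
          * iteratedDeriv (p+j) u x)
        = ∑ m ∈ range (k+l+1), (if p + j = m then
            Complex.ofReal ((i.choose p : ℝ) * a i x * iteratedDeriv (i-p) (b j) x)
              * iteratedDeriv m u x else 0) := by
    intro i hi j hj p hp
    rw [Finset.sum_ite_eq (range (k+l+1)) (p+j)
      (fun m => Complex.ofReal ((i.choose p : ℝ) * a i x * iteratedDeriv (i-p) (b j) x)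
        * iteratedDeriv m u x)]
    rw [if_pos (by
      rw [mem_range] at hi hj hp ⊢
      omega)]
    push_cast
    ring
  calc ∑ i ∈ range (k+1), (a i x : ℂ) * ∑ j ∈ range (l+1), ∑ p ∈ range (i+1),
        (i.choose p : ℂ) * Complex.ofReal (iteratedDeriv (i-p) (b j) x) * iteratedDeriv (p+j) u x
      = ∑ i ∈ range (k+1), ∑ j ∈ range (l+1), ∑ p ∈ range (i+1), ∑ m ∈ range (k+l+1),
          (if p + j = m then
            Complex.ofReal ((i.choose p : ℝ) * a i x * iteratedDeriv (i-p) (b j) x)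
              * iteratedDeriv m u x else 0) := by
        refine Finset.sum_congr rfl fun i hi => ?_
        rw [Finset.mul_sum]
        refine Finset.sum_congr rfl fun j hj => ?_
        rw [Finset.mul_sum]
        refine Finset.sum_congr rfl fun p hp => ?_
        exact hterm i hi j hj p hp
    _ = ∑ i ∈ range (k+1), ∑ j ∈ range (l+1), ∑ m ∈ range (k+l+1), ∑ p ∈ range (i+1),
          (if p + j = m then
            Complex.ofReal ((i.choose p : ℝ) * a i x * iteratedDeriv (i-p) (b j) x)
              * iteratedDeriv m u x else 0) :=
        Finset.sum_congr rfl fun i _ => Finset.sum_congr rfl fun j _ => Finset.sum_comm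
    _ = ∑ i ∈ range (k+1), ∑ m ∈ range (k+l+1), ∑ j ∈ range (l+1), ∑ p ∈ range (i+1),
          (if p + j = m then
            Complex.ofReal ((i.choose p : ℝ) * a i x * iteratedDeriv (i-p) (b j) x)
              * iteratedDeriv m u x else 0) :=
        Finset.sum_congr rfl fun i _ => Finset.sum_comm
    _ = ∑ m ∈ range (k+l+1), ∑ i ∈ range (k+1), ∑ j ∈ range (l+1), ∑ p ∈ range (i+1),
          (if p + j = m then
            Complex.ofReal ((i.choose p : ℝ) * a i x * iteratedDeriv (i-p) (b j) x)
              * iteratedDeriv m u x else 0) := Finset.sum_comm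
    _ = ∑ m ∈ range (k+l+1), (compC k l a b m x : ℂ) * iteratedDeriv m u x := by
        refine Finset.sum_congr rfl fun m _ => ?_
        unfold compC
        push_cast
        rw [Finset.sum_mul]
        refine Finset.sum_congr rfl fun i _ => ?_
        rw [Finset.sum_mul]
        refine Finset.sum_congr rfl fun j _ => ?_
        rw [Finset.sum_mul]
        refine Finset.sum_congr rfl fun p _ => ?_
        split_ifs with hc
        · push_cast; ring
        · simp

lemma compC_top (k l : ℕ) (a b : ℕ → ℝ → ℝ) (x : ℝ) :
    compC k l a b (k+l) x = a k x * b l x := by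
  unfold compC
  rw [Finset.sum_eq_single_of_mem k (self_mem_range_succ _) ?hi]
  case hi =>
    intro i hi hne
    refine Finset.sum_eq_zero fun j hj => Finset.sum_eq_zero fun p hp => if_neg ?_
    rw [mem_range] at hi hj hp
    omega
  rw [Finset.sum_eq_single_of_mem l (self_mem_range_succ _) ?hj]
  case hj =>
    intro j hj hne
    refine Finset.sum_eq_zero fun p hp => if_neg ?_
    rw [mem_range] at hj hp
    omega
  rw [Finset.sum_eq_single_of_mem k (self_mem_range_succ _) ?hp]
  case hp =>
    intro p hp hne
    exact if_neg (by omega)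
  rw [if_pos rfl]
  simp [Nat.choose_self, Nat.sub_self]

lemma ang_smooth (k : ℕ) (f : ℝ → ℝ) (hf : ContDiff ℝ (⊤ : ℕ∞) f) {u : ℝ → ℂ}
    (hu : ContDiff ℝ (⊤ : ℕ∞) u) : ContDiff ℝ (⊤ : ℕ∞) (Ang k f u) := by
  unfold Ang
  exact contDiff_const.mul (((ofReal_smooth hf).mul (smooth_iteratedDeriv hu k)).add
    (smooth_iteratedDeriv ((ofReal_smooth hf).mul hu) k))

open scoped BigOperators in
/-- Height reduction: the commutator of `⟨f⟩ₖ` and `⟨g⟩ₗ` is a differential operator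
of order at most `k + l - 1`. -/
theorem height_reduction (k l : ℕ) (hkl : 1 ≤ k + l) (f g : ℝ → ℝ)
    (hf : ContDiff ℝ (⊤ : ℕ∞) f) (hg : ContDiff ℝ (⊤ : ℕ∞) g) :
    ∃ c : Fin (k + l) → ℝ → ℝ, (∀ j, ContDiff ℝ (⊤ : ℕ∞) (c j)) ∧
      ∀ u : ℝ → ℂ, ContDiff ℝ (⊤ : ℕ∞) u → ∀ x : ℝ,
        Ang k f (Ang l g u) x - Ang l g (Ang k f u) x =
          ∑ j : Fin (k + l), (c j x : ℂ) * iteratedDeriv (j : ℕ) u x := by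
  refine ⟨fun j => fun x => compC k l (angC_s13 k f) (angC_s13 l g) j x
      - compC l k (angC_s13 l g) (angC_s13 k f) j x, fun j => ?_, fun u hu x => ?_⟩
  · exact (compC_smooth k l _ _ (angC_smooth k f hf) (angC_smooth l g hg) j).sub
      (compC_smooth l k _ _ (angC_smooth l g hg) (angC_smooth k f hf) j)
  · have h1 : Ang k f (Ang l g u) x
        = ∑ m ∈ range (k+l+1), (compC k l (angC_s13 k f) (angC_s13 l g) m x : ℂ)
            * iteratedDeriv m u x := by
      rw [ang_rep k f hf (ang_smooth l g hg hu) x,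
        show Ang l g u = fun y => ∑ j ∈ range (l+1), (angC_s13 l g j y : ℂ) * iteratedDeriv j u y
          from funext (ang_rep l g hg hu)]
      exact comp_rep k l _ _ (angC_smooth k f hf) (angC_smooth l g hg) hu x
    have h2 : Ang l g (Ang k f u) x
        = ∑ m ∈ range (k+l+1), (compC l k (angC_s13 l g) (angC_s13 k f) m x : ℂ)
            * iteratedDeriv m u x := by
      rw [ang_rep l g hg (ang_smooth k f hf hu) x,
        show Ang k f u = fun y => ∑ j ∈ range (k+1), (angC_s13 k f j y : ℂ) * iteratedDeriv j u y
          from funext (ang_rep k f hf hu)]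
      rw [comp_rep l k _ _ (angC_smooth l g hg) (angC_smooth k f hf) hu x]
      rw [show l + k = k + l from Nat.add_comm l k]
    rw [h1, h2, ← Finset.sum_sub_distrib]
    have hcomb : ∀ m ∈ range (k+l+1),
        (compC k l (angC_s13 k f) (angC_s13 l g) m x : ℂ) * iteratedDeriv m u x
          - (compC l k (angC_s13 l g) (angC_s13 k f) m x : ℂ) * iteratedDeriv m u x
        = ((compC k l (angC_s13 k f) (angC_s13 l g) m x
            - compC l k (angC_s13 l g) (angC_s13 k f) m x : ℝ) : ℂ) * iteratedDeriv m u x := by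
      intro m _
      push_cast
      ring
    rw [Finset.sum_congr rfl hcomb, Finset.sum_range_succ]
    have htop : compC k l (angC_s13 k f) (angC_s13 l g) (k+l) x
        - compC l k (angC_s13 l g) (angC_s13 k f) (k+l) x = 0 := by
      rw [compC_top k l, show k + l = l + k from Nat.add_comm k l, compC_top l k]
      simp only [angC_s13, if_pos rfl]
      ring
    rw [htop]
    rw [Fin.sum_univ_eq_sum_range (fun m => ((compC k l (angC_s13 k f) (angC_s13 l g) m x
        - compC l k (angC_s13 l g) (angC_s13 k f) m x : ℝ) : ℂ) * iteratedDeriv m u x) (k+l)]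
    simp
end

section
/- Let ε, h be nonzero real numbers and let V₀, V₁ : ℝ → ℝ be smooth functions. Define operators on smooth functions u : ℝ → ℂ by B₁ u = i·h·ε·⟨1⟩₂ u − i·h·ε⁻¹·⟨V₀⟩₀ u and B₂ u = −i·h²·ε⁻¹·⟨V₁⟩₀ u. Then for every smooth u : ℝ → ℂ, [B₁, [B₁, B₂]] u = 4·i·h⁴·ε·⟨V₁''⟩₂ u − i·h⁴·ε·⟨V₁''''⟩₀ u + 2·i·h⁴·ε⁻¹·⟨V₁'·V₀'⟩₀ u. -/
open scoped ContDiff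

section MagnusAux

variable {F : Type*} [NormedAddCommGroup F] [NormedSpace ℝ F]

private lemma mgDAt {f : ℝ → F} (hf : ContDiff ℝ ∞ f) (x : ℝ) : DifferentiableAt ℝ f x :=
  (contDiff_infty_iff_deriv.mp hf).1 x

private lemma mgSD {f : ℝ → F} (hf : ContDiff ℝ ∞ f) : ContDiff ℝ ∞ (deriv f) :=
  (contDiff_infty_iff_deriv.mp hf).2

private lemma mgSID (n : ℕ) {f : ℝ → F} (hf : ContDiff ℝ ∞ f) :
    ContDiff ℝ ∞ (iteratedDeriv n f) := by
  rw [iteratedDeriv_eq_iterate]; exact hf.iterate_deriv n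

private lemma mgSCast {V : ℝ → ℝ} (hV : ContDiff ℝ ∞ V) :
    ContDiff ℝ ∞ (fun x => (V x : ℂ)) :=
  Complex.ofRealCLM.contDiff.comp hV

private lemma mgDCast {V : ℝ → ℝ} (hV : ContDiff ℝ ∞ V) :
    deriv (fun x => (V x : ℂ)) = fun x => ((deriv V x : ℝ) : ℂ) :=
  funext fun x => (((contDiff_infty_iff_deriv.mp hV).1 x).hasDerivAt.ofReal_comp).deriv

private lemma mgID2 (f : ℝ → F) : iteratedDeriv 2 f = deriv (deriv f) := by
  rw [show (2 : ℕ) = 1 + 1 from rfl, iteratedDeriv_succ, iteratedDeriv_one]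

private lemma mgDerivAdd {f g : ℝ → F} (hf : ContDiff ℝ ∞ f) (hg : ContDiff ℝ ∞ g) :
    deriv (fun x => f x + g x) = fun x => deriv f x + deriv g x :=
  funext fun x => ((mgDAt hf x).hasDerivAt.add (mgDAt hg x).hasDerivAt).deriv

private lemma mgDerivLin (a b : ℂ) {f g : ℝ → ℂ} (hf : ContDiff ℝ ∞ f) (hg : ContDiff ℝ ∞ g) :
    deriv (fun x => a * f x + b * g x) = fun x => a * deriv f x + b * deriv g x := by
  funext x
  rw [deriv_fun_add ((mgDAt hf x).const_mul a) ((mgDAt hg x).const_mul b),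
    deriv_const_mul_field, deriv_const_mul_field]

private lemma mgD2Lin (a b : ℂ) {f g : ℝ → ℂ} (hf : ContDiff ℝ ∞ f) (hg : ContDiff ℝ ∞ g) :
    iteratedDeriv 2 (fun x => a * f x + b * g x)
      = fun x => a * iteratedDeriv 2 f x + b * iteratedDeriv 2 g x := by
  rw [mgID2, mgDerivLin a b hf hg, mgDerivLin a b (mgSD hf) (mgSD hg)]
  simp only [← mgID2]

private lemma mgD2Const (a : ℂ) (f : ℝ → ℂ) :
    iteratedDeriv 2 (fun x => a * f x) = fun x => a * iteratedDeriv 2 f x := by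
  rw [mgID2, deriv_const_mul_field' a, deriv_const_mul_field' a]
  simp only [← mgID2]

private lemma mgProdD1 {V : ℝ → ℝ} (hV : ContDiff ℝ ∞ V) {w : ℝ → ℂ} (hw : ContDiff ℝ ∞ w) :
    deriv (fun x => (V x : ℂ) * w x)
      = fun x => ((deriv V x : ℝ) : ℂ) * w x + (V x : ℂ) * deriv w x := by
  funext x
  rw [deriv_fun_mul (mgDAt (mgSCast hV) x) (mgDAt hw x),
    show deriv (fun x => (V x : ℂ)) x = ((deriv V x : ℝ) : ℂ) from congrFun (mgDCast hV) x]

private lemma mgProdD2 {V : ℝ → ℝ} (hV : ContDiff ℝ ∞ V) {w : ℝ → ℂ} (hw : ContDiff ℝ ∞ w) :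
    iteratedDeriv 2 (fun x => (V x : ℂ) * w x)
      = fun x => ((iteratedDeriv 2 V x : ℝ) : ℂ) * w x
          + 2 * ((deriv V x : ℝ) : ℂ) * deriv w x + (V x : ℂ) * iteratedDeriv 2 w x := by
  rw [mgID2, mgProdD1 hV hw,
    mgDerivAdd ((mgSCast (mgSD hV)).mul hw) ((mgSCast hV).mul (mgSD hw)),
    mgProdD1 (mgSD hV) hw, mgProdD1 hV (mgSD hw)]
  funext x
  rw [mgID2 V, mgID2 w]
  ring

private lemma mgCv1 (f : ℝ → F) : deriv (deriv f) = iteratedDeriv 2 f := (mgID2 f).symm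

private lemma mgCv2 (f : ℝ → F) : deriv (iteratedDeriv 2 f) = iteratedDeriv 3 f := by
  rw [show (3 : ℕ) = 2 + 1 from rfl, iteratedDeriv_succ (n := 2)]

private lemma mgCv2' (f : ℝ → F) : deriv (iteratedDeriv 3 f) = iteratedDeriv 4 f := by
  rw [show (4 : ℕ) = 3 + 1 from rfl, iteratedDeriv_succ (n := 3)]

private lemma mgCv3 (f : ℝ → F) : iteratedDeriv 2 (deriv f) = iteratedDeriv 3 f := by
  rw [show (3 : ℕ) = 2 + 1 from rfl, iteratedDeriv_succ' (n := 2)]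

private lemma mgCv4 (f : ℝ → F) : iteratedDeriv 2 (iteratedDeriv 2 f) = iteratedDeriv 4 f := by
  simp only [iteratedDeriv_eq_iterate]
  rw [← Function.iterate_add_apply]

end MagnusAux

/-- Commutator of operators acting on functions `ℝ → ℂ`. -/
def opComm (A B : (ℝ → ℂ) → ℝ → ℂ) (u : ℝ → ℂ) : ℝ → ℂ :=
  fun x => A (B u) x - B (A u) x

/-- `B₁ u = i·h·ε·⟨1⟩₂ u − i·h·ε⁻¹·⟨V₀⟩₀ u`. -/
noncomputable def B1op (ε h : ℝ) (V0 : ℝ → ℝ) (u : ℝ → ℂ) : ℝ → ℂ :=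
  fun x => Complex.I * (h : ℂ) * (ε : ℂ) * Ang 2 (fun _ => 1) u x
    - Complex.I * (h : ℂ) * (ε : ℂ)⁻¹ * Ang 0 V0 u x

/-- `B₂ u = −i·h²·ε⁻¹·⟨V₁⟩₀ u`. -/
noncomputable def B2op (ε h : ℝ) (V1 : ℝ → ℝ) (u : ℝ → ℂ) : ℝ → ℂ :=
  fun x => -(Complex.I * (h : ℂ) ^ 2 * (ε : ℂ)⁻¹) * Ang 0 V1 u x

theorem magnus_commutator_B1_B1_B2
    (ε h : ℝ) (hε : ε ≠ 0) (hh : h ≠ 0) (V0 V1 : ℝ → ℝ)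
    (hV0 : ContDiff ℝ (⊤ : ℕ∞) V0) (hV1 : ContDiff ℝ (⊤ : ℕ∞) V1)
    (u : ℝ → ℂ) (hu : ContDiff ℝ (⊤ : ℕ∞) u) (x : ℝ) :
    opComm (B1op ε h V0) (opComm (B1op ε h V0) (B2op ε h V1)) u x =
      4 * Complex.I * (h : ℂ) ^ 4 * (ε : ℂ) * Ang 2 (iteratedDeriv 2 V1) u x
      - Complex.I * (h : ℂ) ^ 4 * (ε : ℂ) * Ang 0 (iteratedDeriv 4 V1) u x
      + 2 * Complex.I * (h : ℂ) ^ 4 * (ε : ℂ)⁻¹ *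
          Ang 0 (fun t => deriv V1 t * deriv V0 t) u x := by
  have su : ContDiff ℝ ∞ u := hu.of_le (by simp)
  have sV0 : ContDiff ℝ ∞ V0 := hV0.of_le (by simp)
  have sV1 : ContDiff ℝ ∞ V1 := hV1.of_le (by simp)
  have hεC : (ε : ℂ) ≠ 0 := Complex.ofReal_ne_zero.mpr hε
  -- closed forms of the two operators
  have hB1 : ∀ w : ℝ → ℂ, B1op ε h V0 w = fun y =>
      Complex.I * (h : ℂ) * (ε : ℂ) * iteratedDeriv 2 w y
        + (-(Complex.I * (h : ℂ) * (ε : ℂ)⁻¹)) * ((V0 y : ℂ) * w y) := by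
    intro w; funext y
    simp only [B1op, Ang, Complex.ofReal_one, one_mul, iteratedDeriv_zero]
    ring
  have hB2 : ∀ w : ℝ → ℂ, B2op ε h V1 w = fun y =>
      (-(Complex.I * (h : ℂ) ^ 2 * (ε : ℂ)⁻¹)) * ((V1 y : ℂ) * w y) := by
    intro w; funext y
    simp only [B2op, Ang, iteratedDeriv_zero]
    ring
  set cC : ℂ := Complex.I * (h : ℂ) * (ε : ℂ) with hcC
  set cD : ℂ := -(Complex.I * (h : ℂ) * (ε : ℂ)⁻¹) with hcD
  set cE : ℂ := -(Complex.I * (h : ℂ) ^ 2 * (ε : ℂ)⁻¹) with hcE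
  -- coefficient identities
  have k1 : cC * cC * cE = Complex.I * (h : ℂ) ^ 4 * (ε : ℂ) := by
    rw [hcC, hcE]
    linear_combination (-(Complex.I * (h : ℂ) ^ 4 * (ε : ℂ) ^ 2 * (ε : ℂ)⁻¹)) * Complex.I_sq
      + (Complex.I * (h : ℂ) ^ 4 * (ε : ℂ)) * (mul_inv_cancel₀ hεC)
  have k2 : cC * cE * cD = -(Complex.I * (h : ℂ) ^ 4 * (ε : ℂ)⁻¹) := by
    rw [hcC, hcD, hcE]
    linear_combination (Complex.I * (h : ℂ) ^ 4 * (ε : ℂ) * ((ε : ℂ)⁻¹) ^ 2) * Complex.I_sq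
      + (-(Complex.I * (h : ℂ) ^ 4 * (ε : ℂ)⁻¹)) * (mul_inv_cancel₀ hεC)
  -- smoothness packages
  have sv0u : ContDiff ℝ ∞ (fun y => (V0 y : ℂ) * u y) := (mgSCast sV0).mul su
  have sv1u : ContDiff ℝ ∞ (fun y => (V1 y : ℂ) * u y) := (mgSCast sV1).mul su
  have sf1 : ContDiff ℝ ∞ (fun y => ((iteratedDeriv 2 V1 y : ℝ) : ℂ) * u y) :=
    (mgSCast (mgSID 2 sV1)).mul su
  have sg1 : ContDiff ℝ ∞ (fun y => ((deriv V1 y : ℝ) : ℂ) * deriv u y) :=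
    (mgSCast (mgSD sV1)).mul (mgSD su)
  have sE4f : ContDiff ℝ ∞ (fun y => (V1 y : ℂ) * iteratedDeriv 2 u y) :=
    (mgSCast sV1).mul (mgSID 2 su)
  have sE4g : ContDiff ℝ ∞ (fun y => (V0 y : ℂ) * ((V1 y : ℂ) * u y)) :=
    (mgSCast sV0).mul sv1u
  -- closed form of the inner commutator
  have E5 : opComm (B1op ε h V0) (B2op ε h V1) u = fun y =>
      cC * cE * (((iteratedDeriv 2 V1 y : ℝ) : ℂ) * u y)
        + 2 * (cC * cE) * (((deriv V1 y : ℝ) : ℂ) * deriv u y) := by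
    funext y
    simp only [opComm, hB1, hB2]
    rw [mgD2Const cE (fun y => (V1 y : ℂ) * u y), mgProdD2 sV1 su]
    ring
  -- closed form of B2 (B1 u)
  have E4 : B2op ε h V1 (B1op ε h V0 u) = fun y =>
      cE * cC * ((V1 y : ℂ) * iteratedDeriv 2 u y)
        + cE * cD * ((V0 y : ℂ) * ((V1 y : ℂ) * u y)) := by
    funext y
    simp only [hB2, hB1]
    ring
  -- closed form of B1 (B1 u)
  have E8 : B1op ε h V0 (B1op ε h V0 u) = fun y =>
      cC * (cC * iteratedDeriv 2 (iteratedDeriv 2 u) y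
            + cD * (((iteratedDeriv 2 V0 y : ℝ) : ℂ) * u y
              + 2 * ((deriv V0 y : ℝ) : ℂ) * deriv u y + (V0 y : ℂ) * iteratedDeriv 2 u y))
        + cD * ((V0 y : ℂ) * (cC * iteratedDeriv 2 u y + cD * ((V0 y : ℂ) * u y))) := by
    funext y
    simp only [hB1]
    rw [mgD2Lin cC cD (mgSID 2 su) sv0u, mgProdD2 sV0 su]
  -- unfold the double commutator
  have hgoal : opComm (B1op ε h V0) (opComm (B1op ε h V0) (B2op ε h V1)) u x
      = B1op ε h V0 (opComm (B1op ε h V0) (B2op ε h V1) u) x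
        - (B1op ε h V0 (B2op ε h V1 (B1op ε h V0 u)) x
           - B2op ε h V1 (B1op ε h V0 (B1op ε h V0 u)) x) := rfl
  rw [hgoal, E5, E4, E8]
  simp only [hB1, hB2, Ang, iteratedDeriv_zero]
  rw [mgD2Lin (cC * cE) (2 * (cC * cE)) sf1 sg1,
    mgProdD2 (mgSID 2 sV1) su, mgProdD2 (mgSD sV1) (mgSD su),
    mgD2Lin (cE * cC) (cE * cD) sE4f sE4g,
    mgProdD2 sV1 (mgSID 2 su), mgProdD2 sV0 sv1u, mgProdD1 sV1 su, mgProdD2 sV1 su]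
  simp only [mgCv1, mgCv2, mgCv2', mgCv3, mgCv4]
  push_cast
  linear_combination
    (((iteratedDeriv 4 V1 x : ℝ) : ℂ) * u x
      + 4 * ((iteratedDeriv 3 V1 x : ℝ) : ℂ) * deriv u x
      + 4 * ((iteratedDeriv 2 V1 x : ℝ) : ℂ) * iteratedDeriv 2 u x) * k1
    + (-2 * ((deriv V1 x : ℝ) : ℂ) * ((deriv V0 x : ℝ) : ℂ) * u x) * k2
end
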